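/- For i.i.d. strictly β-stable nonnegative waiting times with β ∈ (0,1), the scaled renewal counting process has uniformly bounded expectation: there is a constant M such that E[N(nt)/n^β] ≤ t^β M for all n ≥ 1 and all t ≥ 0. -/

import Mathlib

open MeasureTheory ProbabilityTheory Filter

open scoped ENNReal

/-- The renewal counting process `N(t) = max{n ≥ 0 : T(n) ≤ t}`. -/
noncomputable def renewalCount {Ω : Type*} (τ : ℕ → Ω → ℝ) (t : ℝ) (ω : Ω) : ℕ :=
  sSup {m : ℕ | ∑ i ∈ Finset.range m, τ i ω ≤ t}

/-!
Bounding `N(s)` by the number of `m ≥ 1` with `T(m) ≤ s` gives `E N(s) ≤ ∑_{m ≥ 1} P(T(m) ≤ s)`.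
By stability, `P(T(m) ≤ s) ≤ P(T(j) ≤ s₀)` for `j = ⌊m (s₀/s)^β⌋`, and by independence
`P(T(j) ≤ s₀) ≤ P(τ₀ ≤ s₀)^j ≤ e^{-j}` once `s₀ > 0` is so small that `P(τ₀ ≤ s₀) ≤ e⁻¹`.
Summing the resulting geometric series gives `E N(s) ≤ e (s/s₀)^β`, and `s = n t` yields the claim.
-/

open Real Topology

lemma tsum_ofReal_exp_neg_mul_succ_le {c : ℝ} (hc : 0 < c) :
    ∑' m : ℕ, ENNReal.ofReal (exp (-(c * (m + 1)))) ≤ ENNReal.ofReal c⁻¹ := by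
  set r := exp (-c)
  have hr1 : r < 1 := exp_lt_one_iff.mpr (neg_lt_zero.mpr hc)
  have hterm (m : ℕ) : exp (-(c * (m + 1))) = r * r ^ m := by
    rw [← exp_nat_mul, ← exp_add]; ring_nf
  simp_rw [hterm]
  rw [← ENNReal.ofReal_tsum_of_nonneg (fun m => by positivity)
    ((summable_geometric_of_lt_one (exp_pos _).le hr1).mul_left r), tsum_mul_left,
    tsum_geometric_of_lt_one (exp_pos _).le hr1]
  refine ENNReal.ofReal_le_ofReal ?_
  have hexp : (c + 1) * r ≤ 1 := by
    calc (c + 1) * r ≤ exp c * r := by gcongr; exact add_one_le_exp c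
      _ = 1 := by rw [← exp_add, add_neg_cancel, exp_zero]
  rw [← div_eq_mul_inv, div_le_iff₀ (sub_pos.mpr hr1)]
  field_simp
  linarith

lemma rpow_one_div_mul_le_rpow_one_div_mul {β j k s s₀ : ℝ} (hβ : 0 < β) (hj : 0 ≤ j) (hk : 0 ≤ k)
    (hs : 0 < s) (hs₀ : 0 ≤ s₀) (h : j ≤ (s₀ / s) ^ β * k) :
    j ^ (1 / β) * s ≤ k ^ (1 / β) * s₀ := by
  rw [← Real.rpow_le_rpow_iff (by positivity) (by positivity) hβ,
    Real.mul_rpow (by positivity) hs.le, Real.mul_rpow (by positivity) hs₀,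
    ← Real.rpow_mul hj, ← Real.rpow_mul hk, one_div_mul_cancel hβ.ne', Real.rpow_one,
    Real.rpow_one, ← le_div_iff₀ (by positivity), mul_div_assoc, ← Real.div_rpow hs₀ hs.le,
    mul_comm]
  exact h

section

variable {Ω : Type*} {τ : ℕ → Ω → ℝ}

lemma sum_range_succ_le_of_lt_renewalCount (hτ : ∀ i ω, 0 ≤ τ i ω) {t : ℝ} {ω : Ω} {m : ℕ}
    (hm : m < renewalCount τ t ω) : ∑ i ∈ Finset.range (m + 1), τ i ω ≤ t := by
  obtain ⟨k, hk, hmk⟩ := exists_lt_of_lt_csSup' hm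
  exact (Finset.sum_le_sum_of_subset_of_nonneg (Finset.range_subset_range.mpr hmk)
    fun i _ _ => hτ i ω).trans hk

lemma renewalCount_le_tsum_indicator (hτ : ∀ i ω, 0 ≤ τ i ω) (t : ℝ) (ω : Ω) :
    (renewalCount τ t ω : ℝ≥0∞) ≤
      ∑' m : ℕ, {ω' | ∑ i ∈ Finset.range (m + 1), τ i ω' ≤ t}.indicator 1 ω :=
  calc (renewalCount τ t ω : ℝ≥0∞)
      = ∑ m ∈ Finset.range (renewalCount τ t ω), 1 := by simp
    _ = ∑ m ∈ Finset.range (renewalCount τ t ω),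
          {ω' | ∑ i ∈ Finset.range (m + 1), τ i ω' ≤ t}.indicator 1 ω :=
        Finset.sum_congr rfl fun m hm => (Set.indicator_of_mem (f := 1)
          (show ω ∈ {ω' | ∑ i ∈ Finset.range (m + 1), τ i ω' ≤ t} from
            sum_range_succ_le_of_lt_renewalCount hτ (Finset.mem_range.mp hm))).symm
    _ ≤ _ := ENNReal.sum_le_tsum _

variable [MeasurableSpace Ω] {μ : Measure Ω}

lemma lintegral_renewalCount_le_tsum
    (hτmeas : ∀ i, Measurable (τ i)) (hτ : ∀ i ω, 0 ≤ τ i ω) (t : ℝ) :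
    ∫⁻ ω, (renewalCount τ t ω : ℝ≥0∞) ∂μ ≤
      ∑' m : ℕ, μ {ω | ∑ i ∈ Finset.range (m + 1), τ i ω ≤ t} := by
  have hmeas (m : ℕ) : MeasurableSet {ω | ∑ i ∈ Finset.range (m + 1), τ i ω ≤ t} :=
    measurableSet_le (Finset.measurable_sum _ fun i _ => hτmeas i) measurable_const
  calc ∫⁻ ω, (renewalCount τ t ω : ℝ≥0∞) ∂μ
      ≤ ∫⁻ ω, ∑' m : ℕ, {ω' | ∑ i ∈ Finset.range (m + 1), τ i ω' ≤ t}.indicator 1 ω ∂μ :=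
        lintegral_mono (renewalCount_le_tsum_indicator hτ t)
    _ = ∑' m : ℕ, μ {ω | ∑ i ∈ Finset.range (m + 1), τ i ω ≤ t} := by
        rw [lintegral_tsum fun m => (measurable_one.indicator (hmeas m)).aemeasurable]
        simp_rw [lintegral_indicator_one (hmeas _)]

lemma exists_pos_measure_le_lt [IsFiniteMeasure μ] {X : Ω → ℝ} (hX : Measurable X)
    (hpos : ∀ ω, 0 < X ω) {ε : ℝ≥0∞} (hε : 0 < ε) : ∃ s > 0, μ {ω | X ω ≤ s} < ε := by
  have hlim : Tendsto (fun s => μ {ω | X ω ≤ s}) (𝓝[>] 0) (𝓝 (μ (⋂ s > 0, {ω | X ω ≤ s}))) :=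
    tendsto_measure_biInter_gt (fun s _ => (measurableSet_le hX measurable_const).nullMeasurableSet)
      (fun s s' _ hss' ω hω => le_trans hω hss') ⟨1, one_pos, measure_ne_top _ _⟩
  have hempty : (⋂ s > 0, {ω | X ω ≤ s}) = ∅ :=
    Set.eq_empty_of_forall_notMem fun ω hω => (Set.mem_iInter₂.mp hω (X ω / 2)
      (half_pos (hpos ω))).not_gt (half_lt_self (hpos ω))
  rw [hempty, measure_empty] at hlim
  exact (eventually_mem_nhdsWithin.and (hlim.eventually (gt_mem_nhds hε))).exists

lemma measure_le_le_of_identDistrib_mul {X Y Y' : Ω → ℝ} {c c' u u' : ℝ}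
    (hY : IdentDistrib Y (fun ω => c * X ω) μ μ) (hY' : IdentDistrib Y' (fun ω => c' * X ω) μ μ)
    (hc : 0 < c) (hc' : 0 ≤ c') (h : c' * u ≤ c * u') :
    μ {ω | Y ω ≤ u} ≤ μ {ω | Y' ω ≤ u'} := by
  change μ (Y ⁻¹' Set.Iic u) ≤ μ (Y' ⁻¹' Set.Iic u')
  rw [hY.measure_mem_eq measurableSet_Iic, hY'.measure_mem_eq measurableSet_Iic]
  refine measure_mono fun ω (hω : c * X ω ≤ u) => ?_
  show c' * X ω ≤ u'
  nlinarith

lemma measure_sum_range_le_le_pow (hτ : ∀ i ω, 0 ≤ τ i ω)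
    (hindep : iIndepFun τ μ) (hid : ∀ i, IdentDistrib (τ i) (τ 0) μ μ) (s : ℝ) (j : ℕ) :
    μ {ω | ∑ i ∈ Finset.range j, τ i ω ≤ s} ≤ μ {ω | τ 0 ω ≤ s} ^ j :=
  calc μ {ω | ∑ i ∈ Finset.range j, τ i ω ≤ s}
      ≤ μ (⋂ i ∈ Finset.range j, τ i ⁻¹' Set.Iic s) :=
        measure_mono fun ω hω => Set.mem_iInter₂.mpr fun i hi =>
          (Finset.single_le_sum (fun i _ => hτ i ω) hi).trans hω
    _ = ∏ i ∈ Finset.range j, μ (τ i ⁻¹' Set.Iic s) :=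
        hindep.measure_inter_preimage_eq_mul _ fun _ _ => measurableSet_Iic
    _ = μ {ω | τ 0 ω ≤ s} ^ j := by
        rw [Finset.prod_congr rfl fun i _ => (hid i).measure_mem_eq measurableSet_Iic,
          Finset.prod_const, Finset.card_range]
        rfl

variable {β : ℝ}

lemma measure_sum_range_le_le_exp (hβ : 0 < β) (hτ : ∀ i ω, 0 ≤ τ i ω)
    (hindep : iIndepFun τ μ) (hid : ∀ i, IdentDistrib (τ i) (τ 0) μ μ)
    (hstable : ∀ k : ℕ, IdentDistrib (fun ω => ∑ i ∈ Finset.range k, τ i ω)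
      (fun ω => (k : ℝ) ^ (1 / β) * τ 0 ω) μ μ)
    {s₀ : ℝ} (hs₀ : 0 ≤ s₀) (hq : μ {ω | τ 0 ω ≤ s₀} ≤ ENNReal.ofReal (exp (-1)))
    {s : ℝ} (hs : 0 < s) {k : ℕ} (hk : k ≠ 0) :
    μ {ω | ∑ i ∈ Finset.range k, τ i ω ≤ s} ≤
      ENNReal.ofReal (exp 1 * exp (-((s₀ / s) ^ β * k))) := by
  set x := (s₀ / s) ^ β * k
  set j := ⌊x⌋₊
  have hjk : (j : ℝ) ^ (1 / β) * s ≤ (k : ℝ) ^ (1 / β) * s₀ :=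
    rpow_one_div_mul_le_rpow_one_div_mul hβ j.cast_nonneg k.cast_nonneg hs hs₀
      (Nat.floor_le (by positivity))
  calc μ {ω | ∑ i ∈ Finset.range k, τ i ω ≤ s}
      ≤ μ {ω | ∑ i ∈ Finset.range j, τ i ω ≤ s₀} :=
        measure_le_le_of_identDistrib_mul (hstable k) (hstable j)
          (by positivity) (by positivity) hjk
    _ ≤ μ {ω | τ 0 ω ≤ s₀} ^ j := measure_sum_range_le_le_pow hτ hindep hid s₀ j
    _ ≤ ENNReal.ofReal (exp (-1)) ^ j := pow_le_pow_left' hq j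
    _ = ENNReal.ofReal (exp (-j)) := by
        rw [← ENNReal.ofReal_pow (exp_pos _).le, ← exp_nat_mul, mul_neg_one]
    _ ≤ ENNReal.ofReal (exp 1 * exp (-x)) := by
        rw [← exp_add]
        exact ENNReal.ofReal_le_ofReal (exp_le_exp.mpr (by linarith [Nat.lt_floor_add_one x]))

lemma lintegral_renewalCount_le_of_stable (hβ : 0 < β) (hτmeas : ∀ i, Measurable (τ i))
    (hτ : ∀ i ω, 0 ≤ τ i ω) (hindep : iIndepFun τ μ) (hid : ∀ i, IdentDistrib (τ i) (τ 0) μ μ)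
    (hstable : ∀ k : ℕ, IdentDistrib (fun ω => ∑ i ∈ Finset.range k, τ i ω)
      (fun ω => (k : ℝ) ^ (1 / β) * τ 0 ω) μ μ)
    {s₀ : ℝ} (hs₀ : 0 < s₀) (hq : μ {ω | τ 0 ω ≤ s₀} ≤ ENNReal.ofReal (exp (-1)))
    {s : ℝ} (hs : 0 < s) :
    ∫⁻ ω, (renewalCount τ s ω : ℝ≥0∞) ∂μ ≤ ENNReal.ofReal (exp 1 * (s / s₀) ^ β) := by
  calc ∫⁻ ω, (renewalCount τ s ω : ℝ≥0∞) ∂μ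
      ≤ ∑' m : ℕ, μ {ω | ∑ i ∈ Finset.range (m + 1), τ i ω ≤ s} :=
        lintegral_renewalCount_le_tsum hτmeas hτ s
    _ ≤ ∑' m : ℕ, ENNReal.ofReal (exp 1) * ENNReal.ofReal (exp (-((s₀ / s) ^ β * (m + 1)))) :=
        ENNReal.tsum_le_tsum fun m => by
          rw [← ENNReal.ofReal_mul (exp_pos 1).le]
          exact_mod_cast
            measure_sum_range_le_le_exp hβ hτ hindep hid hstable hs₀.le hq hs m.succ_ne_zero
    _ ≤ ENNReal.ofReal (exp 1) * ENNReal.ofReal ((s₀ / s) ^ β)⁻¹ := by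
        rw [ENNReal.tsum_mul_left]
        gcongr
        exact tsum_ofReal_exp_neg_mul_succ_le (by positivity)
    _ = ENNReal.ofReal (exp 1 * (s / s₀) ^ β) := by
        rw [← ENNReal.ofReal_mul (exp_pos 1).le, ← Real.inv_rpow (by positivity), inv_div]

end

/-- For i.i.d. strictly `β`-stable positive waiting times with `β ∈ (0,1)` (so the partial
sum `T(k)` has the same law as `k^{1/β} τ_1`), the scaled renewal counting process has
uniformly bounded expectation: there is a constant `M` with
`E[N(nt)/n^β] ≤ t^β M` for all `n ≥ 1` and all `t ≥ 0`. -/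
theorem expectation_renewalCount_le_of_stable
    {Ω : Type*} [MeasurableSpace Ω] (μ : Measure Ω) [IsProbabilityMeasure μ]
    (τ : ℕ → Ω → ℝ) (β : ℝ) (hβ : β ∈ Set.Ioo (0 : ℝ) 1)
    (hτmeas : ∀ i, Measurable (τ i)) (hτpos : ∀ i ω, 0 < τ i ω)
    -- the waiting times are i.i.d.
    (hτindep : iIndepFun τ μ)
    (hτid : ∀ i, IdentDistrib (τ i) (τ 0) μ μ)
    -- strict `β`-stability: `T(k) =ᵈ k^{1/β} τ_1`
    (hstable : ∀ k : ℕ, IdentDistrib (fun ω => ∑ i ∈ Finset.range k, τ i ω)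
      (fun ω => (k : ℝ) ^ (1 / β) * τ 0 ω) μ μ) :
    ∃ M : ℝ, 0 ≤ M ∧ ∀ n : ℕ, 1 ≤ n → ∀ t : ℝ, 0 ≤ t →
      ∫⁻ ω, (renewalCount τ ((n : ℝ) * t) ω : ℝ≥0∞) ∂μ ≤
        ENNReal.ofReal (t ^ β * M) * ENNReal.ofReal ((n : ℝ) ^ β) := by
  have hτ : ∀ i ω, 0 ≤ τ i ω := fun i ω => (hτpos i ω).le
  obtain ⟨s₀, hs₀, hq⟩ := exists_pos_measure_le_lt (μ := μ) (hτmeas 0) (hτpos 0)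
    (ENNReal.ofReal_pos.mpr (exp_pos (-1)))
  refine ⟨exp 1 / s₀ ^ β, by positivity, fun n hn t ht => ?_⟩
  rcases ht.eq_or_lt with rfl | ht
  · have hN (ω : Ω) : renewalCount τ 0 ω = 0 := Nat.eq_zero_of_not_pos fun h =>
      (hτpos 0 ω).not_ge (by simpa using sum_range_succ_le_of_lt_renewalCount hτ h)
    simp [hN]
  · calc ∫⁻ ω, (renewalCount τ ((n : ℝ) * t) ω : ℝ≥0∞) ∂μ
        ≤ ENNReal.ofReal (exp 1 * ((n * t) / s₀) ^ β) :=
          lintegral_renewalCount_le_of_stable hβ.1 hτmeas hτ hτindep hτid hstable hs₀ hq.le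
            (by positivity)
      _ = ENNReal.ofReal (t ^ β * (exp 1 / s₀ ^ β)) * ENNReal.ofReal ((n : ℝ) ^ β) := by
          rw [← ENNReal.ofReal_mul (by positivity), Real.div_rpow (by positivity) hs₀.le,
            Real.mul_rpow (by positivity) ht.le]
          congr 1
          ring
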